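/- Let m be a non-negative integer and y₀,…,y₅ complex numbers with y₀+y₁+y₂ = y₃+y₄+y₅ = 1−m. Define V(y₀,…,y₅) = (y₀+y₄)_m (y₀+y₅)_m · ₃F₂(−m, y₀+y₁−y₃, y₀+y₂−y₃; y₀+y₄, y₀+y₅; 1). Then V is invariant under any permutation of {y₀,y₁,y₂} and under any permutation of {y₃,y₄,y₅}, and V is multiplied by (−1)^m when the two sets {y₀,y₁,y₂} and {y₃,y₄,y₅} are interchanged (i.e., under (y₀,y₁,y₂,y₃,y₄,y₅) ↦ (y₃,y₄,y₅,y₀,y₁,y₂)); here assume parameters generic so all Pochhammer denominators are nonzero. -/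

import Mathlib

open Complex Finset

/-- Pochhammer symbol (rising factorial) `(x)_k`. -/
noncomputable def poch (x : ℂ) (k : ℕ) : ℂ := ∏ i ∈ Finset.range k, (x + i)

lemma poch_zero (x : ℂ) : poch x 0 = 1 := by simp [poch]

lemma poch_succ (x : ℂ) (k : ℕ) : poch x (k+1) = poch x k * (x + k) := by
  simp [poch, Finset.prod_range_succ]

lemma poch_add (x : ℂ) (j k : ℕ) : poch x (j + k) = poch x j * poch (x + j) k := by
  unfold poch
  rw [Finset.prod_range_add]
  congr 1
  exact Finset.prod_congr rfl fun i _ => by push_cast; ring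

-- Vandermonde
lemma V1 (x y : ℂ) (n : ℕ) : poch (x + y) n
    = ∑ j ∈ range (n+1), (n.choose j : ℂ) * poch x j * poch y (n - j) := by
  induction n with
  | zero => simp [poch]
  | succ n ih =>
    have split : ∀ j ∈ range (n+1),
        (n.choose j : ℂ) * poch x j * poch y (n - j) * (x + y + n)
        = ((n.choose j : ℂ) * poch x j * poch y ((n+1) - j)
            + (n.choose j : ℂ) * poch x (j+1) * poch y (n - j)) := by
      intro j hj
      rw [mem_range, Nat.lt_succ_iff] at hj
      have h1 : (n+1) - j = (n - j) + 1 := by omega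
      rw [h1, poch_succ, poch_succ]
      have h2 : ((n - j : ℕ) : ℂ) = (n : ℂ) - j := by push_cast [Nat.cast_sub hj]; ring
      rw [h2]; ring
    rw [poch_succ, ih, Finset.sum_mul, Finset.sum_congr rfl split, Finset.sum_add_distrib]
    rw [Finset.sum_range_succ'
      (fun j => ((n+1).choose j : ℂ) * poch x j * poch y (n + 1 - j)) (n+1)]
    have pascal : ∀ j ∈ range (n+1),
        ((n+1).choose (j+1) : ℂ) * poch x (j+1) * poch y (n + 1 - (j+1))
        = (n.choose (j+1) : ℂ) * poch x (j+1) * poch y (n - j)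
          + (n.choose j : ℂ) * poch x (j+1) * poch y (n - j) := by
      intro j _
      rw [Nat.choose_succ_succ, Nat.succ_sub_succ]
      push_cast; ring
    rw [Finset.sum_congr rfl pascal, Finset.sum_add_distrib]
    have e1 : ∑ j ∈ range (n+1), (n.choose j : ℂ) * poch x j * poch y ((n+1) - j)
        = (∑ j ∈ range (n+1), (n.choose (j+1) : ℂ) * poch x (j+1) * poch y (n - j))
          + ((n+1).choose 0 : ℂ) * poch x 0 * poch y (n + 1 - 0) := by
      rw [Finset.sum_range_succ'
        (fun j => (n.choose j : ℂ) * poch x j * poch y ((n+1) - j)) n]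
      rw [Finset.sum_range_succ
        (fun j => (n.choose (j+1) : ℂ) * poch x (j+1) * poch y (n - j)) n]
      simp [Nat.succ_sub_succ]
    rw [e1]; ring

lemma poch_one (x : ℂ) : poch x 1 = x := by simp [poch]


lemma poch_succ' (x : ℂ) (k : ℕ) : poch x (k+1) = x * poch (x+1) k := by
  rw [show k+1 = 1+k from by omega, poch_add, poch_one]
  norm_num


lemma V2 (b : ℂ) (s : ℕ) : ∀ e : ℂ,
    ∑ k ∈ range (s+1), (-1:ℂ)^k * (s.choose k : ℂ) * poch b k * poch (e+k) (s - k)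
    = poch (e - b) s := by
  induction s with
  | zero => intro e; simp [poch]
  | succ s ih =>
    intro e
    have key : ∑ k ∈ range (s+1+1), (-1:ℂ)^k * ((s+1).choose k : ℂ) * poch b k * poch (e+k) (s+1 - k)
        = (e - b) * ∑ k ∈ range (s+1), (-1:ℂ)^k * (s.choose k : ℂ) * poch b k * poch ((e+1)+k) (s - k) := by
      rw [Finset.sum_range_succ'
        (fun k => (-1:ℂ)^k * ((s+1).choose k : ℂ) * poch b k * poch (e+(k:ℕ)) (s+1 - k)) (s+1)]
      have hsplit : ∀ j ∈ range (s+1),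
          (-1:ℂ)^(j+1) * ((s+1).choose (j+1) : ℂ) * poch b (j+1) * poch (e+((j+1:ℕ):ℂ)) (s+1 - (j+1))
          = (-1:ℂ)^(j+1) * ((s.choose (j+1) : ℂ)) * poch b (j+1) * poch (e+((j+1:ℕ):ℂ)) (s+1 - (j+1))
            - (-1:ℂ)^j * ((s.choose j : ℂ)) * poch b j * ((b+j) * poch ((e+1)+(j:ℂ)) (s - j)) := by
        intro j hj
        rw [mem_range, Nat.lt_succ_iff] at hj
        have hb : poch b (j+1) = poch b j * (b + j) := poch_succ b j
        have he : poch (e+((j+1:ℕ):ℂ)) (s+1-(j+1)) = poch ((e+1)+(j:ℂ)) (s - j) := by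
          rw [Nat.succ_sub_succ]
          congr 1; push_cast; ring
        rw [Nat.choose_succ_succ, he, hb]
        push_cast; ring
      rw [Finset.sum_congr rfl hsplit, Finset.sum_sub_distrib]
      -- A-part
      have hA : (∑ j ∈ range (s+1),
            (-1:ℂ)^(j+1) * ((s.choose (j+1) : ℂ)) * poch b (j+1) * poch (e+((j+1:ℕ):ℂ)) (s+1 - (j+1)))
          + (-1:ℂ)^0 * (((s+1).choose 0 : ℕ) : ℂ) * poch b 0 * poch (e+((0:ℕ):ℂ)) (s+1-0)
          = ∑ k ∈ range (s+1), (-1:ℂ)^k * (s.choose k : ℂ) * poch b k * ((e+k) * poch ((e+1)+(k:ℂ)) (s - k)) := by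
        rw [Finset.sum_range_succ'
          (fun k => (-1:ℂ)^k * (s.choose k : ℂ) * poch b k * ((e+(k:ℂ)) * poch ((e+1)+(k:ℂ)) (s - k))) s]
        rw [Finset.sum_range_succ
          (fun j => (-1:ℂ)^(j+1) * ((s.choose (j+1) : ℂ)) * poch b (j+1) * poch (e+((j+1:ℕ):ℂ)) (s+1 - (j+1))) s]
        have h0 : ∀ j ∈ range s,
            (-1:ℂ)^(j+1) * ((s.choose (j+1) : ℂ)) * poch b (j+1) * poch (e+((j+1:ℕ):ℂ)) (s+1 - (j+1))
            = (-1:ℂ)^(j+1) * (s.choose (j+1) : ℂ) * poch b (j+1) * ((e+((j+1:ℕ):ℂ)) * poch ((e+1)+((j+1:ℕ):ℂ)) (s - (j+1))) := by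
          intro j hj
          rw [mem_range] at hj
          have h1 : s+1 - (j+1) = (s - (j+1)) + 1 := by omega
          rw [h1, poch_succ' (e+((j+1:ℕ):ℂ))]
          have h2 : poch (e + ((j+1:ℕ):ℂ) + 1) (s - (j+1)) = poch ((e+1)+((j+1:ℕ):ℂ)) (s - (j+1)) := by
            congr 1; push_cast; ring
          rw [h2]
        rw [Finset.sum_congr rfl h0]
        have hz : (-1:ℂ)^(s+1) * ((s.choose (s+1) : ℂ)) * poch b (s+1) * poch (e+((s+1:ℕ):ℂ)) (s+1 - (s+1)) = 0 := by
          simp [Nat.choose_succ_self]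
        rw [hz]
        have h00 : (-1:ℂ)^0 * ((s.choose 0 : ℂ)) * poch b 0 * ((e+((0:ℕ):ℂ)) * poch ((e+1)+((0:ℕ):ℂ)) (s - 0)) 
            = (-1:ℂ)^0 * (((s+1).choose 0 : ℕ) : ℂ) * poch b 0 * poch (e+((0:ℕ):ℂ)) (s+1-0) := by
          have : poch (e+((0:ℕ):ℂ)) (s+1-0) = (e+((0:ℕ):ℂ)) * poch ((e+1)+((0:ℕ):ℂ)) (s-0) := by
            rw [show s+1-0 = (s-0)+1 from rfl, poch_succ']
            congr 2
            push_cast; ring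
          rw [this]
          norm_num
        rw [← h00]
        ring
      have hAB : (∑ k ∈ range (s+1), (-1:ℂ)^k * (s.choose k : ℂ) * poch b k * ((e+k) * poch ((e+1)+(k:ℂ)) (s - k)))
          - (∑ j ∈ range (s+1), (-1:ℂ)^j * ((s.choose j : ℂ)) * poch b j * ((b+j) * poch ((e+1)+(j:ℂ)) (s - j)))
          = (e - b) * ∑ k ∈ range (s+1), (-1:ℂ)^k * (s.choose k : ℂ) * poch b k * poch ((e+1)+(k:ℂ)) (s - k) := by
        rw [← Finset.sum_sub_distrib, Finset.mul_sum]
        exact Finset.sum_congr rfl fun k _ => by ring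
      linear_combination hA + hAB
    rw [key, ih (e+1)]
    rw [poch_succ']
    congr 1
    ring

lemma sum_tri (n : ℕ) (f : ℕ → ℕ → ℂ) :
    ∑ k ∈ range (n+1), ∑ j ∈ range (n+1-k), f k j
    = ∑ s ∈ range (n+1), ∑ k ∈ range (s+1), f k (s-k) := by
  rw [Finset.sum_sigma', Finset.sum_sigma']
  refine Finset.sum_nbij' (fun p => (⟨p.1+p.2, p.1⟩ : Σ _ : ℕ, ℕ))
    (fun p => (⟨p.2, p.1-p.2⟩ : Σ _ : ℕ, ℕ)) ?_ ?_ ?_ ?_ ?_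
  · rintro ⟨k, j⟩ h
    simp only [mem_sigma, mem_range] at h ⊢
    omega
  · rintro ⟨s, k⟩ h
    simp only [mem_sigma, mem_range] at h ⊢
    omega
  · rintro ⟨k, j⟩ h
    simp only [mem_sigma, mem_range] at h
    simp only [Sigma.mk.inj_iff, heq_eq_eq]
    refine ⟨trivial, by omega⟩
  · rintro ⟨s, k⟩ h
    simp only [mem_sigma, mem_range] at h
    simp only [Sigma.mk.inj_iff, heq_eq_eq]
    refine ⟨by omega, trivial⟩
  · rintro ⟨k, j⟩ h
    simp only [Nat.add_sub_cancel_left]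

noncomputable def Pfun (m : ℕ) (a b e f : ℂ) : ℂ :=
  ∑ k ∈ range (m+1), (-1:ℂ)^k * (m.choose k : ℂ) * poch a k * poch b k
      * poch (e+k) (m-k) * poch (f+k) (m-k)

lemma StepA (m : ℕ) (a b e f : ℂ) :
    Pfun m a b e f = ∑ s ∈ range (m+1),
      (m.choose s : ℂ) * poch a s * poch (e-b) s * poch (e+s) (m-s) * poch (f-a) (m-s) := by
  unfold Pfun
  have h1 : ∀ k ∈ range (m+1),
      (-1:ℂ)^k * (m.choose k : ℂ) * poch a k * poch b k * poch (e+k) (m-k) * poch (f+k) (m-k)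
      = ∑ j ∈ range (m+1-k), (fun k j => (-1:ℂ)^k * (m.choose k : ℂ) * ((m-k).choose j : ℂ)
          * poch a (k+j) * poch b k * poch (e+k) (m-k) * poch (f-a) (m-k-j)) k j := by
    intro k hk
    rw [mem_range, Nat.lt_succ_iff] at hk
    have hf : poch (f+(k:ℂ)) (m-k) = poch ((a+k) + (f-a)) (m-k) := by congr 1; ring
    rw [hf, V1 (a+(k:ℂ)) (f-a) (m-k), Finset.mul_sum]
    rw [show m+1-k = m-k+1 from by omega]
    apply Finset.sum_congr rfl
    intro j hj
    beta_reduce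
    rw [poch_add a k j]
    ring
  rw [Finset.sum_congr rfl h1, sum_tri]
  refine Finset.sum_congr rfl fun s hs => ?_
  rw [mem_range, Nat.lt_succ_iff] at hs
  have h2 : ∀ k ∈ range (s+1),
      (-1:ℂ)^k * (m.choose k : ℂ) * ((m-k).choose (s-k) : ℂ)
          * poch a (k+(s-k)) * poch b k * poch (e+k) (m-k) * poch (f-a) (m-k-(s-k))
      = ((m.choose s : ℂ) * poch a s * poch (e+s) (m-s) * poch (f-a) (m-s))
          * ((-1:ℂ)^k * (s.choose k : ℂ) * poch b k * poch (e+k) (s-k)) := by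
    intro k hk
    rw [mem_range, Nat.lt_succ_iff] at hk
    have hc : (m.choose k : ℂ) * ((m-k).choose (s-k) : ℂ) = (m.choose s : ℂ) * (s.choose k : ℂ) := by
      have := Nat.choose_mul (n := m) hk
      exact_mod_cast this.symm
    have he : poch (e+(k:ℂ)) (m-k) = poch (e+k) (s-k) * poch (e+(s:ℂ)) (m-s) := by
      rw [show m-k = (s-k) + (m-s) from by omega, poch_add]
      congr 2
      push_cast [Nat.cast_sub hk]
      ring
    rw [show k+(s-k) = s from by omega, show m-k-(s-k) = m-s from by omega, he]
    linear_combination ((-1:ℂ)^k * poch a s * poch b k * poch (e+(k:ℂ)) (s-k)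
      * poch (e+(s:ℂ)) (m-s) * poch (f-a) (m-s)) * hc
  rw [Finset.sum_congr rfl h2, ← Finset.mul_sum, V2 b s e]
  ring

lemma LemC (m : ℕ) (α u β γ : ℂ) :
    ∑ s ∈ range (m+1), (m.choose s : ℂ) * poch α s * poch u s * poch ((u+β)+s) (m-s) * poch γ (m-s)
    = ∑ t ∈ range (m+1), (m.choose t : ℂ) * poch u t * poch β (m-t) * poch γ (m-t)
        * poch ((α+γ)+((m-t:ℕ):ℂ)) t := by
  have h1 : ∀ s ∈ range (m+1),
      (m.choose s : ℂ) * poch α s * poch u s * poch ((u+β)+s) (m-s) * poch γ (m-s)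
      = ∑ j ∈ range (m+1-s), (fun s j => (m.choose s : ℂ) * ((m-s).choose j : ℂ)
          * poch α s * poch u (s+j) * poch β (m-s-j) * poch γ (m-s)) s j := by
    intro s hs
    rw [mem_range, Nat.lt_succ_iff] at hs
    have hb : poch ((u+β)+(s:ℂ)) (m-s) = poch ((u+s) + β) (m-s) := by congr 1; ring
    rw [hb, V1 (u+(s:ℂ)) β (m-s), Finset.mul_sum, Finset.sum_mul]
    rw [show m+1-s = m-s+1 from by omega]
    apply Finset.sum_congr rfl
    intro j hj
    beta_reduce
    rw [poch_add u s j]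
    ring
  rw [Finset.sum_congr rfl h1, sum_tri]
  refine Finset.sum_congr rfl fun t ht => ?_
  rw [mem_range, Nat.lt_succ_iff] at ht
  have h2 : ∀ s ∈ range (t+1),
      (fun s j => (m.choose s : ℂ) * ((m-s).choose j : ℂ)
          * poch α s * poch u (s+j) * poch β (m-s-j) * poch γ (m-s)) s (t-s)
      = ((m.choose t : ℂ) * poch u t * poch β (m-t) * poch γ (m-t))
          * ((t.choose s : ℂ) * poch α s * poch (γ+((m-t:ℕ):ℂ)) (t-s)) := by
    intro s hsrange
    rw [mem_range, Nat.lt_succ_iff] at hsrange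
    beta_reduce
    have hc : (m.choose s : ℂ) * ((m-s).choose (t-s) : ℂ) = (m.choose t : ℂ) * (t.choose s : ℂ) := by
      have := Nat.choose_mul (n := m) hsrange
      exact_mod_cast this.symm
    have hg : poch γ (m-s) = poch γ (m-t) * poch (γ+((m-t:ℕ):ℂ)) (t-s) := by
      rw [show m-s = (m-t) + (t-s) from by omega, poch_add]
    rw [show s+(t-s) = t from by omega, show m-s-(t-s) = m-t from by omega, hg]
    linear_combination (poch α s * poch u t * poch β (m-t) * poch γ (m-t)
      * poch (γ+((m-t:ℕ):ℂ)) (t-s)) * hc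
  rw [Finset.sum_congr rfl h2, ← Finset.mul_sum]
  have h3 : ∑ s ∈ range (t+1), (t.choose s : ℂ) * poch α s * poch (γ+((m-t:ℕ):ℂ)) (t-s)
      = poch ((α+γ)+((m-t:ℕ):ℂ)) t := by
    rw [show (α+γ)+((m-t:ℕ):ℂ) = α + (γ+((m-t:ℕ):ℂ)) from by ring, V1]
  rw [h3]

lemma PM (m : ℕ) (a b e f : ℂ) :
    Pfun m a b e f = ∑ t ∈ range (m+1), (m.choose t : ℂ) * poch (e-b) t * poch b (m-t)
        * poch (f-a) (m-t) * poch (f+((m-t:ℕ):ℂ)) t := by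
  rw [StepA]
  have h1 : ∀ s ∈ range (m+1),
      (m.choose s : ℂ) * poch a s * poch (e-b) s * poch (e+s) (m-s) * poch (f-a) (m-s)
      = (m.choose s : ℂ) * poch a s * poch (e-b) s * poch (((e-b)+b)+s) (m-s) * poch (f-a) (m-s) := by
    intro s _
    have : poch (((e-b)+b)+(s:ℂ)) (m-s) = poch (e+(s:ℂ)) (m-s) := by congr 1; ring
    rw [this]
  rw [Finset.sum_congr rfl h1, LemC m a (e-b) b (f-a)]
  refine Finset.sum_congr rfl fun t _ => ?_
  have : poch ((a+(f-a))+((m-t:ℕ):ℂ)) t = poch (f+((m-t:ℕ):ℂ)) t := by congr 1; ring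
  rw [this]

lemma H2 (m : ℕ) (a b e f : ℂ) :
    Pfun m a b e f = Pfun m (f-b) (f-a) (e+f-a-b) f := by
  rw [PM, PM m (f-b) (f-a) (e+f-a-b) f]
  refine Finset.sum_congr rfl fun t _ => ?_
  have h1 : poch ((e+f-a-b)-(f-a)) t = poch (e-b) t := by congr 1; ring
  have h2 : poch (f-(f-b)) (m-t) = poch b (m-t) := by congr 1; ring
  rw [h1, h2]
  ring

lemma Pab (m : ℕ) (a b e f : ℂ) : Pfun m a b e f = Pfun m b a e f := by
  unfold Pfun
  exact Finset.sum_congr rfl fun k _ => by ring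

lemma Pef (m : ℕ) (a b e f : ℂ) : Pfun m a b e f = Pfun m a b f e := by
  unfold Pfun
  exact Finset.sum_congr rfl fun k _ => by ring

lemma H2e (m : ℕ) (a b e f : ℂ) :
    Pfun m a b e f = Pfun m (e-b) (e-a) e (e+f-a-b) := by
  rw [Pef, H2 m a b f e, Pef]
  congr 1
  ring

lemma refl1 (x : ℂ) {m k : ℕ} (hk : k ≤ m) :
    poch (1-(m:ℂ)-x) k = (-1:ℂ)^k * poch (x+((m-k:ℕ):ℂ)) k := by
  unfold poch
  have h1 : ∀ i ∈ range k, (1-(m:ℂ)-x+(i:ℂ))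
      = (-1) * (x+((m-k:ℕ):ℂ)+((k-1-i:ℕ):ℂ)) := by
    intro i hi
    rw [mem_range] at hi
    have e1 : (k-1-i:ℕ) = k-(i+1) := by omega
    rw [e1, Nat.cast_sub (by omega : i+1 ≤ k), Nat.cast_sub hk]
    push_cast; ring
  rw [Finset.prod_congr rfl h1, Finset.prod_mul_distrib, Finset.prod_const, Finset.card_range]
  congr 1
  exact Finset.prod_range_reflect (fun i => (x+((m-k:ℕ):ℂ)+(i:ℂ))) k

lemma Prev (m : ℕ) (a b e f : ℂ) :
    Pfun m (1-(m:ℂ)-e) (1-(m:ℂ)-f) (1-(m:ℂ)-a) (1-(m:ℂ)-b) = (-1:ℂ)^m * Pfun m a b e f := by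
  unfold Pfun
  have hterm : ∀ k ∈ range (m+1),
      (-1:ℂ)^k * (m.choose k : ℂ) * poch (1-(m:ℂ)-e) k * poch (1-(m:ℂ)-f) k
        * poch ((1-(m:ℂ)-a)+(k:ℂ)) (m-k) * poch ((1-(m:ℂ)-b)+(k:ℂ)) (m-k)
      = (-1:ℂ)^m * ((-1:ℂ)^(m-k) * (m.choose (m-k) : ℂ) * poch a (m-k) * poch b (m-k)
        * poch (e+((m-k:ℕ):ℂ)) (m-(m-k)) * poch (f+((m-k:ℕ):ℂ)) (m-(m-k))) := by
    intro k hk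
    rw [mem_range, Nat.lt_succ_iff] at hk
    rw [show m-(m-k) = k from by omega, Nat.choose_symm hk]
    rw [refl1 e hk, refl1 f hk]
    have r3 : ∀ x : ℂ, poch ((1-(m:ℂ)-x)+(k:ℂ)) (m-k) = (-1:ℂ)^(m-k) * poch x (m-k) := by
      intro x
      have harg : (1-(m:ℂ)-x)+(k:ℂ) = 1-((m-k:ℕ):ℂ)-x := by
        rw [Nat.cast_sub hk]; ring
      rw [harg, refl1 x (le_refl (m-k)), Nat.sub_self]
      norm_num
    rw [r3 a, r3 b]
    rcases Nat.even_or_odd m with hm | hm <;> rcases Nat.even_or_odd k with hk2 | hk2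
    · have h3 : Even (m-k) := (Nat.even_sub hk).mpr (iff_of_true hm hk2)
      rw [hm.neg_one_pow, hk2.neg_one_pow, h3.neg_one_pow]; ring
    · have h3 : Odd (m-k) := Nat.Even.sub_odd hk hm hk2
      rw [hm.neg_one_pow, hk2.neg_one_pow, h3.neg_one_pow]; ring
    · have h3 : Odd (m-k) := Nat.Odd.sub_even hk hm hk2
      rw [hm.neg_one_pow, hk2.neg_one_pow, h3.neg_one_pow]; ring
    · have h3 : Even (m-k) := Nat.Odd.sub_odd hm hk2
      rw [hm.neg_one_pow, hk2.neg_one_pow, h3.neg_one_pow]; ring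
  rw [Finset.sum_congr rfl hterm, ← Finset.mul_sum]
  congr 1
  rw [← Finset.sum_range_reflect (fun k => (-1:ℂ)^k * (m.choose k : ℂ) * poch a k * poch b k
    * poch (e+((k:ℕ):ℂ)) (m-k) * poch (f+((k:ℕ):ℂ)) (m-k)) (m+1)]
  refine Finset.sum_congr rfl fun k hk => ?_
  simp only [Nat.add_sub_cancel]

lemma poch_succb (x : ℂ) (k : ℕ) : poch x (k+1) = poch x k * (x + k) := by
  simp [poch, Finset.prod_range_succ]

lemma poch_neg_nat {m : ℕ} : ∀ {k : ℕ}, k ≤ m →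
    poch (-(m:ℂ)) k = (-1:ℂ)^k * (k.factorial : ℂ) * (m.choose k : ℂ) := by
  intro k
  induction k with
  | zero => intro _; simp [poch]
  | succ k ih =>
    intro hk
    rw [poch_succb, ih (by omega)]
    have hcc : ((m.choose (k+1) : ℕ) : ℂ) * ((k:ℂ)+1) = ((m.choose k : ℕ) : ℂ) * ((m:ℂ)-k) := by
      have h := Nat.choose_succ_right_eq m k
      have h2 : ((m.choose (k+1) * (k+1) : ℕ) : ℂ) = ((m.choose k * (m-k) : ℕ) : ℂ) := by
        exact_mod_cast congrArg (fun t : ℕ => (t : ℂ)) h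
      push_cast [Nat.cast_sub (by omega : k ≤ m)] at h2
      convert h2 using 1
    rw [Nat.factorial_succ]
    push_cast
    linear_combination ((-1:ℂ)^k * (k.factorial:ℂ)) * hcc

/-- The invariant expression
`V = (y₀+z₁)_m (y₀+z₂)_m · ₃F₂(−m, y₀+y₁−z₀, y₀+y₂−z₀; y₀+z₁, y₀+z₂; 1)`,
where `y = (y₀,y₁,y₂)` and `z = (y₃,y₄,y₅)`. -/
noncomputable def Vexpr (m : ℕ) (y z : Fin 3 → ℂ) : ℂ :=
  poch (y 0 + z 1) m * poch (y 0 + z 2) m *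
    ∑ k ∈ Finset.range (m + 1),
      poch (-(m : ℂ)) k * poch (y 0 + y 1 - z 0) k * poch (y 0 + y 2 - z 0) k /
        (poch (y 0 + z 1) k * poch (y 0 + z 2) k * (Nat.factorial k))

noncomputable def W (m : ℕ) (y z : Fin 3 → ℂ) : ℂ :=
  Pfun m (y 0 + y 1 - z 0) (y 0 + y 2 - z 0) (y 0 + z 1) (y 0 + z 2)

lemma Vexpr_eq (m : ℕ) (y z : Fin 3 → ℂ)
    (h1 : ∀ k ≤ m, poch (y 0 + z 1) k ≠ 0) (h2 : ∀ k ≤ m, poch (y 0 + z 2) k ≠ 0) :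
    Vexpr m y z = W m y z := by
  unfold Vexpr W Pfun
  rw [Finset.mul_sum]
  refine Finset.sum_congr rfl fun k hk => ?_
  rw [mem_range, Nat.lt_succ_iff] at hk
  have hE := poch_add (y 0 + z 1) k (m-k)
  rw [show k+(m-k) = m from by omega] at hE
  have hF := poch_add (y 0 + z 2) k (m-k)
  rw [show k+(m-k) = m from by omega] at hF
  rw [hE, hF, poch_neg_nat hk]
  have hk1 := h1 k hk
  have hk2 := h2 k hk
  have hk3 : ((Nat.factorial k : ℕ):ℂ) ≠ 0 := Nat.cast_ne_zero.mpr (Nat.factorial_ne_zero k)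
  field_simp

section Wlemmas
variable (m : ℕ) (y z : Fin 3 → ℂ)

lemma Wz12 (hy : y 0 + y 1 + y 2 = 1 - (m:ℂ)) (hz : z 0 + z 1 + z 2 = 1 - (m:ℂ)) :
    W m y (z ∘ ⇑(Equiv.swap (1:Fin 3) 2)) = W m y z := by
  unfold W
  have e0 : (z ∘ ⇑(Equiv.swap (1:Fin 3) 2)) 0 = z 0 := by
    simp [Equiv.swap_apply_of_ne_of_ne]
  have e1 : (z ∘ ⇑(Equiv.swap (1:Fin 3) 2)) 1 = z 2 := by simp
  have e2 : (z ∘ ⇑(Equiv.swap (1:Fin 3) 2)) 2 = z 1 := by simp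
  rw [e0, e1, e2, Pef]

lemma Wz01 (hy : y 0 + y 1 + y 2 = 1 - (m:ℂ)) (hz : z 0 + z 1 + z 2 = 1 - (m:ℂ)) :
    W m y (z ∘ ⇑(Equiv.swap (0:Fin 3) 1)) = W m y z := by
  unfold W
  have e0 : (z ∘ ⇑(Equiv.swap (0:Fin 3) 1)) 0 = z 1 := by simp
  have e1 : (z ∘ ⇑(Equiv.swap (0:Fin 3) 1)) 1 = z 0 := by simp
  have e2 : (z ∘ ⇑(Equiv.swap (0:Fin 3) 1)) 2 = z 2 := by
    simp [Equiv.swap_apply_of_ne_of_ne]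
  rw [e0, e1, e2]
  rw [H2 m (y 0 + y 1 - z 0) (y 0 + y 2 - z 0) (y 0 + z 1) (y 0 + z 2)]
  have a1 : y 0 + y 1 - z 1 = (y 0 + z 2) - (y 0 + y 2 - z 0) := by linear_combination hy - hz
  have a2 : y 0 + y 2 - z 1 = (y 0 + z 2) - (y 0 + y 1 - z 0) := by linear_combination hy - hz
  have a3 : y 0 + z 0 = (y 0 + z 1) + (y 0 + z 2) - (y 0 + y 1 - z 0) - (y 0 + y 2 - z 0) := by
    linear_combination hy - hz
  rw [a1, a2, a3]

lemma Wz02 (hy : y 0 + y 1 + y 2 = 1 - (m:ℂ)) (hz : z 0 + z 1 + z 2 = 1 - (m:ℂ)) :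
    W m y (z ∘ ⇑(Equiv.swap (0:Fin 3) 2)) = W m y z := by
  unfold W
  have e0 : (z ∘ ⇑(Equiv.swap (0:Fin 3) 2)) 0 = z 2 := by simp
  have e1 : (z ∘ ⇑(Equiv.swap (0:Fin 3) 2)) 1 = z 1 := by
    simp [Equiv.swap_apply_of_ne_of_ne]
  have e2 : (z ∘ ⇑(Equiv.swap (0:Fin 3) 2)) 2 = z 0 := by simp
  rw [e0, e1, e2]
  rw [H2e m (y 0 + y 1 - z 0) (y 0 + y 2 - z 0) (y 0 + z 1) (y 0 + z 2)]
  have a1 : y 0 + y 1 - z 2 = (y 0 + z 1) - (y 0 + y 2 - z 0) := by linear_combination hy - hz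
  have a2 : y 0 + y 2 - z 2 = (y 0 + z 1) - (y 0 + y 1 - z 0) := by linear_combination hy - hz
  have a3 : y 0 + z 0 = (y 0 + z 1) + (y 0 + z 2) - (y 0 + y 1 - z 0) - (y 0 + y 2 - z 0) := by
    linear_combination hy - hz
  rw [a1, a2, a3]

lemma Wswap (hy : y 0 + y 1 + y 2 = 1 - (m:ℂ)) (hz : z 0 + z 1 + z 2 = 1 - (m:ℂ)) :
    W m z y = (-1:ℂ)^m * W m y z := by
  unfold W
  have a1 : z 0 + z 1 - y 0 = 1-(m:ℂ)-(y 0 + z 2) := by linear_combination hz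
  have a2 : z 0 + z 2 - y 0 = 1-(m:ℂ)-(y 0 + z 1) := by linear_combination hz
  have a3 : z 0 + y 1 = 1-(m:ℂ)-(y 0 + y 2 - z 0) := by linear_combination hy
  have a4 : z 0 + y 2 = 1-(m:ℂ)-(y 0 + y 1 - z 0) := by linear_combination hy
  rw [a1, a2, a3, a4]
  rw [Prev m (y 0 + y 2 - z 0) (y 0 + y 1 - z 0) (y 0 + z 2) (y 0 + z 1)]
  rw [Pab, Pef]

end Wlemmas

lemma sum3_perm (w : Fin 3 → ℂ) (σ : Equiv.Perm (Fin 3)) :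
    w (σ 0) + w (σ 1) + w (σ 2) = w 0 + w 1 + w 2 := by
  simpa [Fin.sum_univ_three] using Equiv.sum_comp σ w

lemma Wz_swap_ij (m : ℕ) (y z : Fin 3 → ℂ)
    (hy : y 0 + y 1 + y 2 = 1 - (m:ℂ)) (hz : z 0 + z 1 + z 2 = 1 - (m:ℂ))
    (i j : Fin 3) : W m y (z ∘ ⇑(Equiv.swap i j)) = W m y z := by
  fin_cases i <;> fin_cases j
  · simp [Equiv.swap_self]
  · exact Wz01 m y z hy hz
  · exact Wz02 m y z hy hz
  · rw [Equiv.swap_comm]; exact Wz01 m y z hy hz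
  · simp [Equiv.swap_self]
  · exact Wz12 m y z hy hz
  · rw [Equiv.swap_comm]; exact Wz02 m y z hy hz
  · rw [Equiv.swap_comm]; exact Wz12 m y z hy hz
  · simp [Equiv.swap_self]

lemma Wz_tau (m : ℕ) (y : Fin 3 → ℂ) (hy : y 0 + y 1 + y 2 = 1 - (m:ℂ))
    (τ : Equiv.Perm (Fin 3)) :
    ∀ z : Fin 3 → ℂ, z 0 + z 1 + z 2 = 1 - (m:ℂ) → W m y (z ∘ ⇑τ) = W m y z := by
  refine Equiv.Perm.swap_induction_on τ (fun z hz => ?_) (fun f i j hij ih z hz => ?_)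
  · have : z ∘ ⇑(1 : Equiv.Perm (Fin 3)) = z := rfl
    rw [this]
  · 
    have hcomp : z ∘ ⇑(Equiv.swap i j * f) = (z ∘ ⇑(Equiv.swap i j)) ∘ ⇑f := rfl
    rw [hcomp]
    have hz' : (z ∘ ⇑(Equiv.swap i j)) 0 + (z ∘ ⇑(Equiv.swap i j)) 1 + (z ∘ ⇑(Equiv.swap i j)) 2
        = 1 - (m:ℂ) := by
      have := sum3_perm z (Equiv.swap i j)
      exact this.trans hz
    rw [ih (z ∘ ⇑(Equiv.swap i j)) hz']
    exact Wz_swap_ij m y z hy hz i j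

lemma neg_one_pow_ne (m : ℕ) : ((-1:ℂ)^m) ≠ 0 := pow_ne_zero _ (by norm_num)

lemma Wy_sigma (m : ℕ) (z : Fin 3 → ℂ) (hz : z 0 + z 1 + z 2 = 1 - (m:ℂ))
    (σ : Equiv.Perm (Fin 3)) :
    ∀ y : Fin 3 → ℂ, y 0 + y 1 + y 2 = 1 - (m:ℂ) → W m (y ∘ ⇑σ) z = W m y z := by
  refine Equiv.Perm.swap_induction_on σ (fun y hy => rfl) (fun f i j hij ih y hy => ?_)
  · 

    have hcomp : y ∘ ⇑(Equiv.swap i j * f) = (y ∘ ⇑(Equiv.swap i j)) ∘ ⇑f := rfl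
    rw [hcomp]
    have hy' : (y ∘ ⇑(Equiv.swap i j)) 0 + (y ∘ ⇑(Equiv.swap i j)) 1 + (y ∘ ⇑(Equiv.swap i j)) 2
        = 1 - (m:ℂ) := (sum3_perm y (Equiv.swap i j)).trans hy
    rw [ih (y ∘ ⇑(Equiv.swap i j)) hy']
    -- goal : W m (y ∘ swap i j) z = W m y z
    have h1 := Wswap m (y ∘ ⇑(Equiv.swap i j)) z hy' hz
    have h2 := Wz_swap_ij m z y hz hy i j
    have h3 := Wswap m y z hy hz
    have : (-1:ℂ)^m * W m (y ∘ ⇑(Equiv.swap i j)) z = (-1:ℂ)^m * W m y z := by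
      rw [← h1, h2, h3]
    exact mul_left_cancel₀ (neg_one_pow_ne m) this

/-- The 72-element symmetry group of terminating `₃F₂(1)` series:
invariance under permutations within `{y₀,y₁,y₂}` and `{y₃,y₄,y₅}`, and the
sign `(−1)^m` under interchanging the two sets. -/
theorem terminating_3F2_symmetries (m : ℕ) (y z : Fin 3 → ℂ)
    (hy : y 0 + y 1 + y 2 = 1 - (m : ℂ))
    (hz : z 0 + z 1 + z 2 = 1 - (m : ℂ))
    (hgen : ∀ (i j : Fin 3) (k : ℕ), k ≤ m → poch (y i + z j) k ≠ 0) :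
    (∀ σ τ : Equiv.Perm (Fin 3), Vexpr m (y ∘ σ) (z ∘ τ) = Vexpr m y z)
      ∧ Vexpr m z y = (-1 : ℂ) ^ m * Vexpr m y z := by
  constructor
  · intro σ τ
    have hyσ : (y ∘ ⇑σ) 0 + (y ∘ ⇑σ) 1 + (y ∘ ⇑σ) 2 = 1 - (m:ℂ) :=
      (sum3_perm y σ).trans hy
    have hzτ : (z ∘ ⇑τ) 0 + (z ∘ ⇑τ) 1 + (z ∘ ⇑τ) 2 = 1 - (m:ℂ) :=
      (sum3_perm z τ).trans hz
    have step1 : Vexpr m (y ∘ ⇑σ) (z ∘ ⇑τ) = W m (y ∘ ⇑σ) (z ∘ ⇑τ) :=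
      Vexpr_eq m (y ∘ ⇑σ) (z ∘ ⇑τ)
        (fun k hk => hgen (σ 0) (τ 1) k hk) (fun k hk => hgen (σ 0) (τ 2) k hk)
    have step2 : W m (y ∘ ⇑σ) (z ∘ ⇑τ) = W m (y ∘ ⇑σ) z :=
      Wz_tau m (y ∘ ⇑σ) hyσ τ z hz
    have step3 : W m (y ∘ ⇑σ) z = W m y z := Wy_sigma m z hz σ y hy
    have step4 : Vexpr m y z = W m y z :=
      Vexpr_eq m y z (fun k hk => hgen 0 1 k hk) (fun k hk => hgen 0 2 k hk)
    rw [step1, step2, step3, step4]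
  · have step1 : Vexpr m z y = W m z y := by
      refine Vexpr_eq m z y (fun k hk => ?_) (fun k hk => ?_)
      · have := hgen 1 0 k hk
        rwa [add_comm (y 1) (z 0)] at this
      · have := hgen 2 0 k hk
        rwa [add_comm (y 2) (z 0)] at this
    have step2 : W m z y = (-1:ℂ)^m * W m y z := Wswap m y z hy hz
    have step4 : Vexpr m y z = W m y z :=
      Vexpr_eq m y z (fun k hk => hgen 0 1 k hk) (fun k hk => hgen 0 2 k hk)
    rw [step1, step2, step4]
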